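/- Let M be a connected Riemannian manifold and f ∈ C⁰(M). Suppose for each p ∈ M there is a neighborhood U of p, continuous functions f_k on U with f_k → f uniformly on U, and reals a_k → 0 with Δf_k ≥ a_k on U in the support sense. (We say Δf ≥ 0 in the generalized support sense.) If f attains a maximum on M, then f is constant. -/

import Mathlib

open Filter RealInnerProductSpace

/-- The Laplacian of a function on Euclidean space, as the trace of the second derivative
over the standard orthonormal basis. -/
noncomputable def lapl {n : ℕ} (f : EuclideanSpace ℝ (Fin n) → ℝ)
    (p : EuclideanSpace ℝ (Fin n)) : ℝ :=
  ∑ i : Fin n,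
    fderiv ℝ (fun x => fderiv ℝ f x (EuclideanSpace.single i 1)) p (EuclideanSpace.single i 1)

/-- `Δf ≥ a` on `U` in the support sense: at every `q ∈ U` and every `ε > 0` there is a
`C²` lower support function `φ` for `f` at `q` with `Δφ(q) ≥ a - ε`. -/
def SupportSubharmonicOn {n : ℕ} (f : EuclideanSpace ℝ (Fin n) → ℝ) (a : ℝ)
    (U : Set (EuclideanSpace ℝ (Fin n))) : Prop :=
  ∀ q ∈ U, ∀ ε : ℝ, 0 < ε →
    ∃ V ∈ nhds q, ∃ φ : EuclideanSpace ℝ (Fin n) → ℝ,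
      ContDiffOn ℝ 2 φ V ∧ (∀ x ∈ V ∩ U, φ x ≤ f x) ∧ φ q = f q ∧ a - ε ≤ lapl φ q

lemma second_dir_deriv_nonpos {E : Type*} [NormedAddCommGroup E] [NormedSpace ℝ E]
    {φ : E → ℝ} {y : E} (hφ : ContDiffAt ℝ 2 φ y) (hmax : IsLocalMax φ y) (v : E) :
    fderiv ℝ (fun x => fderiv ℝ φ x v) y v ≤ 0 := by
  obtain ⟨u, hu, hcu⟩ := hφ.contDiffOn le_rfl (by simp)
  obtain ⟨O, hOu, hOopen, hyO⟩ := mem_nhds_iff.1 hu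
  have hCO : ContDiffOn ℝ 2 φ O := hcu.mono hOu
  set F : E → ℝ := fun x => fderiv ℝ φ x v with hF
  have hF1 : ContDiffAt ℝ 1 (fderiv ℝ φ) y := hφ.fderiv_right (by norm_num)
  have hFd : DifferentiableAt ℝ F y :=
    (hF1.differentiableAt one_ne_zero).clm_apply (differentiableAt_const v)
  by_contra hA
  push_neg at hA
  set L : ℝ → E := fun t => y + t • v with hLdef
  have hL : ∀ t : ℝ, HasDerivAt L v t := by
    intro t
    simpa [hLdef] using ((hasDerivAt_id t).smul_const v).const_add y
  have hL0 : L 0 = y := by simp [hLdef]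
  have hF0 : F y = 0 := by
    rw [hF]; simp [hmax.fderiv_eq_zero]
  have hcomp : HasDerivAt (fun t => F (L t)) (fderiv ℝ F y v) 0 := by
    have h1 : HasFDerivAt F (fderiv ℝ F y) (L 0) := hL0 ▸ hFd.hasFDerivAt
    exact h1.comp_hasDerivAt 0 (hL 0)
  rw [hasDerivAt_iff_tendsto_slope] at hcomp
  have hslope : ∀ᶠ t in nhdsWithin (0:ℝ) {(0:ℝ)}ᶜ,
      0 < slope (fun t => F (L t)) 0 t :=
    hcomp.eventually (eventually_gt_nhds hA)
  obtain ⟨δ1, hδ1, hball1⟩ := Metric.mem_nhdsWithin_iff.1 hslope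
  have hS : (L ⁻¹' (O ∩ {x | φ x ≤ φ y})) ∈ nhds (0:ℝ) := by
    have hcontL : Continuous L := by fun_prop
    have hmem : O ∩ {x | φ x ≤ φ y} ∈ nhds y :=
      Filter.inter_mem (hOopen.mem_nhds hyO) hmax
    exact hcontL.continuousAt.preimage_mem_nhds (hL0 ▸ hmem)
  obtain ⟨δ2, hδ2, hball2⟩ := Metric.mem_nhds_iff.1 hS
  set t0 : ℝ := min δ1 δ2 / 2 with ht0def
  have ht0 : 0 < t0 := by positivity
  have hregion : ∀ t ∈ Set.Icc (0:ℝ) t0, L t ∈ O ∧ φ (L t) ≤ φ y := by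
    intro t ht
    have : t ∈ Metric.ball (0:ℝ) δ2 := by
      rw [Metric.mem_ball, Real.dist_eq, sub_zero, abs_of_nonneg ht.1]
      have : t0 < δ2 := by
        have := min_le_right δ1 δ2
        simp only [ht0def]
        linarith
      linarith [ht.2]
    exact hball2 this
  have hderiv : ∀ t ∈ Set.Icc (0:ℝ) t0, HasDerivAt (fun s => φ (L s)) (F (L t)) t := by
    intro t ht
    have hdφ : DifferentiableAt ℝ φ (L t) :=
      ((hCO.contDiffAt (hOopen.mem_nhds (hregion t ht).1)).differentiableAt two_ne_zero)
    exact hdφ.hasFDerivAt.comp_hasDerivAt t (hL t)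
  have hcontψ : ContinuousOn (fun s => φ (L s)) (Set.Icc 0 t0) :=
    fun t ht => (hderiv t ht).continuousAt.continuousWithinAt
  obtain ⟨c, hc, hceq⟩ := exists_hasDerivAt_eq_slope (fun s => φ (L s)) (fun t => F (L t))
    ht0 hcontψ (fun t ht => hderiv t (Set.mem_Icc.2 ⟨le_of_lt ht.1, le_of_lt ht.2⟩))
  have hFLc_pos : 0 < F (L c) := by
    have hcball : c ∈ Metric.ball (0:ℝ) δ1 ∩ {(0:ℝ)}ᶜ := by
      constructor
      · rw [Metric.mem_ball, Real.dist_eq, sub_zero, abs_of_pos hc.1]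
        have : t0 < δ1 := by
          have := min_le_left δ1 δ2
          simp only [ht0def]; linarith
        linarith [hc.2]
      · exact ne_of_gt hc.1
    have hsl := hball1 hcball
    simp only [Set.mem_setOf_eq] at hsl
    have : slope (fun t => F (L t)) 0 c = F (L c) / c := by
      rw [slope_def_field]; rw [hL0, hF0]; ring
    rw [this] at hsl
    have := mul_pos hsl hc.1
    rwa [div_mul_cancel₀ _ (ne_of_gt hc.1)] at this
  have hFLc_nonpos : F (L c) ≤ 0 := by
    rw [hceq]
    have h1 : φ (L t0) ≤ φ y := (hregion t0 (Set.mem_Icc.2 ⟨le_of_lt ht0, le_refl t0⟩)).2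
    rw [hL0]
    apply div_nonpos_of_nonpos_of_nonneg <;> [linarith; linarith]
  linarith

lemma diffAt_fderiv_apply {E : Type*} [NormedAddCommGroup E] [NormedSpace ℝ E]
    {φ : E → ℝ} {q : E} (hφ : ContDiffAt ℝ 2 φ q) (v : E) :
    DifferentiableAt ℝ (fun x => fderiv ℝ φ x v) q :=
  ((hφ.fderiv_right (m := 1) (by norm_num)).differentiableAt one_ne_zero).clm_apply (differentiableAt_const v)

lemma lapl_add_smul {n : ℕ} {φ ψ : EuclideanSpace ℝ (Fin n) → ℝ}
    {q : EuclideanSpace ℝ (Fin n)} (hφ : ContDiffAt ℝ 2 φ q) (hψ : ContDiff ℝ 2 ψ) (c : ℝ) :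
    lapl (fun x => φ x + c * ψ x) q = lapl φ q + c * lapl ψ q := by
  unfold lapl
  rw [Finset.mul_sum, ← Finset.sum_add_distrib]
  apply Finset.sum_congr rfl
  intro i _
  set v := EuclideanSpace.single (𝕜 := ℝ) i (1:ℝ) with hv
  have hev : (fun x => fderiv ℝ (fun y => φ y + c * ψ y) x v)
      =ᶠ[nhds q] (fun x => fderiv ℝ φ x v + c * fderiv ℝ ψ x v) := by
    filter_upwards [hφ.eventually (by simp)] with x hx
    have hdφ : DifferentiableAt ℝ φ x := hx.differentiableAt two_ne_zero
    have hdψ : DifferentiableAt ℝ ψ x := hψ.differentiable two_ne_zero x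
    rw [fderiv_fun_add hdφ (hdψ.const_mul c), fderiv_const_mul hdψ c]
    simp
  rw [hev.fderiv_eq]
  have hA : DifferentiableAt ℝ (fun x => fderiv ℝ φ x v) q := diffAt_fderiv_apply hφ v
  have hB : DifferentiableAt ℝ (fun x => fderiv ℝ ψ x v) q :=
    diffAt_fderiv_apply hψ.contDiffAt v
  rw [fderiv_fun_add hA (hB.const_mul c), fderiv_const_mul hB c]
  simp

variable {E : Type*} [NormedAddCommGroup E] [InnerProductSpace ℝ E]

noncomputable def bar (z : E) (α : ℝ) : E → ℝ := fun x => Real.exp (-α * ⟪x - z, x - z⟫)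

lemma bar_contDiff (z : E) (α : ℝ) : ContDiff ℝ 2 (bar z α) :=
  Real.contDiff_exp.comp
    (contDiff_const.mul ((contDiff_id.sub contDiff_const).inner ℝ (contDiff_id.sub contDiff_const)))

lemma bar_hasFDerivAt (z : E) (α : ℝ) (x : E) :
    HasFDerivAt (bar z α)
      ((-(2*α) * bar z α x) • (innerSL ℝ (x - z))) x := by
  have h2 : HasFDerivAt (fun y : E => y - z) (ContinuousLinearMap.id ℝ E) x :=
    (hasFDerivAt_id x).sub_const z
  have hu : HasFDerivAt (fun y : E => ⟪y - z, y - z⟫)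
      ((fderivInnerCLM ℝ (x - z, x - z)).comp
        ((ContinuousLinearMap.id ℝ E).prod (ContinuousLinearMap.id ℝ E))) x :=
    h2.inner ℝ h2
  have h1 : HasFDerivAt (fun y : E => -α * ⟪y - z, y - z⟫)
      ((-α) • ((fderivInnerCLM ℝ (x - z, x - z)).comp
        ((ContinuousLinearMap.id ℝ E).prod (ContinuousLinearMap.id ℝ E)))) x :=
    hu.const_mul (-α)
  have := (Real.hasDerivAt_exp (-α * ⟪x - z, x - z⟫)).comp_hasFDerivAt x h1
  refine this.congr_fderiv ?_
  ext v
  simp [bar, fderivInnerCLM_apply, real_inner_comm (x - z) v, inner_sub_left]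
  ring

lemma bar_fderiv_apply (z : E) (α : ℝ) (x v : E) :
    fderiv ℝ (bar z α) x v = -(2*α) * bar z α x * ⟪x - z, v⟫ := by
  rw [(bar_hasFDerivAt z α x).fderiv]
  simp only [ContinuousLinearMap.smul_apply, innerSL_apply_apply, smul_eq_mul]

lemma bar_second (z : E) (α : ℝ) (x v : E) :
    fderiv ℝ (fun y => fderiv ℝ (bar z α) y v) x v
      = bar z α x * (4*α^2*⟪x - z, v⟫^2 - 2*α*⟪v, v⟫) := by
  have hfun : (fun y => fderiv ℝ (bar z α) y v)
      = fun y => (-(2*α) * bar z α y) * ⟪y - z, v⟫ := by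
    funext y; rw [bar_fderiv_apply]
  rw [hfun]
  have h2 : HasFDerivAt (fun y : E => ⟪y - z, v⟫)
      ((fderivInnerCLM ℝ (x - z, v)).comp
        ((ContinuousLinearMap.id ℝ E).prod (0 : E →L[ℝ] E))) x :=
    ((hasFDerivAt_id x).sub_const z).inner ℝ (hasFDerivAt_const v x)
  have h1 : HasFDerivAt (fun y : E => -(2*α) * bar z α y)
      ((-(2*α)) • ((-(2*α) * bar z α x) • (innerSL ℝ (x - z)))) x :=
    (bar_hasFDerivAt z α x).const_mul (-(2*α))
  have hm := h1.fun_mul h2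
  rw [hm.fderiv]
  simp [fderivInnerCLM_apply, real_inner_comm (x - z) v, inner_sub_left]
  ring

lemma lapl_bar {n : ℕ} (z x : EuclideanSpace ℝ (Fin n)) (α : ℝ) :
    lapl (bar z α) x = bar z α x * (4*α^2*⟪x - z, x - z⟫ - 2*α*n) := by
  unfold lapl
  have h1 : ∀ i : Fin n, ⟪x - z, (EuclideanSpace.single i (1:ℝ) : EuclideanSpace ℝ (Fin n))⟫
      = (x - z) i := by
    intro i
    rw [EuclideanSpace.inner_single_right]
    simp
  have h2 : ∀ i : Fin n, ⟪(EuclideanSpace.single i (1:ℝ) : EuclideanSpace ℝ (Fin n)),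
      EuclideanSpace.single i (1:ℝ)⟫ = 1 := by
    intro i
    rw [EuclideanSpace.inner_single_right]
    simp
  have hterm : ∀ i : Fin n,
      fderiv ℝ (fun y => fderiv ℝ (bar z α) y (EuclideanSpace.single i 1)) x
        (EuclideanSpace.single i 1)
      = bar z α x * (4*α^2*((x - z) i)^2 - 2*α) := by
    intro i
    rw [bar_second, h1 i, h2 i]
    ring
  rw [Finset.sum_congr rfl (fun i _ => hterm i)]
  have hinner : ⟪x - z, x - z⟫ = ∑ i : Fin n, ((x - z) i)^2 := by
    rw [PiLp.inner_apply]
    simp [RCLike.inner_apply, pow_two]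
  rw [hinner, Finset.mul_sum]
  simp only [mul_sub]
  rw [Finset.sum_sub_distrib, Finset.sum_const, Finset.card_fin, Finset.mul_sum]
  simp only [nsmul_eq_mul]
  ring

-- monotonicity
lemma SupportSubharmonicOn.mono {n : ℕ} {g : EuclideanSpace ℝ (Fin n) → ℝ} {a : ℝ}
    {U W : Set (EuclideanSpace ℝ (Fin n))} (h : SupportSubharmonicOn g a U) (hWU : W ⊆ U) :
    SupportSubharmonicOn g a W := by
  intro q hq ε hε
  obtain ⟨V, hV, φ, h1, h2, h3, h4⟩ := h q (hWU hq) ε hε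
  exact ⟨V, hV, φ, h1, fun x hx => h2 x ⟨hx.1, hWU hx.2⟩, h3, h4⟩

lemma support_add_bar {n : ℕ} {g : EuclideanSpace ℝ (Fin n) → ℝ} {a : ℝ}
    {W : Set (EuclideanSpace ℝ (Fin n))} (hsub : SupportSubharmonicOn g a W)
    {z : EuclideanSpace ℝ (Fin n)} {α η c0 : ℝ} (hη : 0 < η)
    (hlapl : ∀ x ∈ W, c0 ≤ lapl (bar z α) x) :
    SupportSubharmonicOn (fun x => g x + η * bar z α x) (a + η * c0) W := by
  intro q hq ε hε
  obtain ⟨V, hV, φ, h1, h2, h3, h4⟩ := hsub q hq ε hε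
  refine ⟨V, hV, fun x => φ x + η * bar z α x, ?_, ?_, by simp only []; rw [h3], ?_⟩
  · exact h1.add (contDiffOn_const.mul (bar_contDiff z α).contDiffOn)
  · intro x hx
    have := h2 x hx
    simp only []
    linarith
  · rw [lapl_add_smul (h1.contDiffAt hV) (bar_contDiff z α) η]
    have := hlapl q hq
    nlinarith [h4]

lemma no_max_interior {n : ℕ} {g : EuclideanSpace ℝ (Fin n) → ℝ} {a : ℝ}
    {W : Set (EuclideanSpace ℝ (Fin n))} (hsub : SupportSubharmonicOn g a W) (ha : 0 < a)
    (hW : IsOpen W) {y : EuclideanSpace ℝ (Fin n)} (hy : y ∈ W)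
    (hmax : ∀ x ∈ W, g x ≤ g y) : False := by
  obtain ⟨V, hV, φ, hφC, hφle, hφeq, hφlapl⟩ := hsub y hy (a/2) (half_pos ha)
  have hlocmax : IsLocalMax φ y := by
    filter_upwards [hV, hW.mem_nhds hy] with x hxV hxW
    calc φ x ≤ g x := hφle x ⟨hxV, hxW⟩
    _ ≤ g y := hmax x hxW
    _ = φ y := hφeq.symm
  have hca : ContDiffAt ℝ 2 φ y := hφC.contDiffAt hV
  have hle : lapl φ y ≤ 0 := by
    unfold lapl
    apply Finset.sum_nonpos
    intro i _
    exact second_dir_deriv_nonpos hca hlocmax _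
  linarith

lemma max_on_boundary {n : ℕ} {g : EuclideanSpace ℝ (Fin n) → ℝ} {a : ℝ}
    {A W : Set (EuclideanSpace ℝ (Fin n))} (hA : IsCompact A) (hW : IsOpen W) (hWA : W ⊆ A)
    (hg : ContinuousOn g A) (hsub : SupportSubharmonicOn g a W) (ha : 0 < a)
    (hne : A.Nonempty) : ∃ b ∈ A \ W, ∀ x ∈ A, g x ≤ g b := by
  obtain ⟨y, hyA, hy⟩ := hA.exists_isMaxOn hne hg
  have hy' : ∀ x ∈ A, g x ≤ g y := isMaxOn_iff.1 hy
  by_cases hyW : y ∈ W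
  · exact absurd (no_max_interior hsub ha hW hyW (fun x hx => hy' x (hWA hx))) not_false
  · exact ⟨y, ⟨hyA, hyW⟩, hy'⟩

set_option maxHeartbeats 1000000 in
/-- Generalized maximum principle (Lemma 2.2): if `f ∈ C⁰(M)` satisfies `Δf ≥ 0` in the
generalized support sense — locally `f` is a uniform limit of continuous `f_k` with
`Δf_k ≥ a_k` in the support sense and `a_k → 0` — and `f` attains a maximum on the
connected manifold `M` (here Euclidean space), then `f` is constant. -/
theorem statement12 {n : ℕ} (f : EuclideanSpace ℝ (Fin n) → ℝ) (hf : Continuous f)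
    (hgen : ∀ p : EuclideanSpace ℝ (Fin n),
      ∃ U ∈ nhds p, ∃ fk : ℕ → EuclideanSpace ℝ (Fin n) → ℝ, ∃ a : ℕ → ℝ,
        (∀ k, ContinuousOn (fk k) U) ∧
        TendstoUniformlyOn (fun k x => fk k x) f Filter.atTop U ∧
        Filter.Tendsto a Filter.atTop (nhds 0) ∧
        ∀ k, SupportSubharmonicOn (fk k) (a k) U)
    (hmax : ∃ p, ∀ x, f x ≤ f p) :
    ∀ x y, f x = f y := by
  rcases Nat.eq_zero_or_pos n with hn | hn
  · subst hn
    intro x y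
    have : x = y := PiLp.ext fun i => Fin.elim0 i
    rw [this]
  have hnontriv : Nontrivial (EuclideanSpace ℝ (Fin n)) := by
    refine ⟨⟨EuclideanSpace.single ⟨0, hn⟩ 1, 0, fun h => ?_⟩⟩
    have := congrArg (fun v : EuclideanSpace ℝ (Fin n) => ‖v‖) h
    simp at this
  obtain ⟨p, hp⟩ := hmax
  set M := f p with hM
  set S := {x : EuclideanSpace ℝ (Fin n) | f x = M} with hSdef
  have hclosed : IsClosed S := isClosed_eq hf continuous_const
  have hopen : IsOpen S := by
    rw [isOpen_iff_mem_nhds]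
    intro q hq
    obtain ⟨U, hU, fk, a, hfkc, hunif, ha, hsub⟩ := hgen q
    obtain ⟨δ, hδ, hballU⟩ := Metric.nhds_basis_closedBall.mem_iff.1 hU
    refine Filter.mem_of_superset (Metric.ball_mem_nhds q (show (0:ℝ) < δ/4 by linarith)) ?_
    intro z hz
    by_contra hzS
    have hfzM : f z < M := lt_of_le_of_ne (hp z) hzS
    set r := dist z q with hr
    have hrpos : 0 < r := by
      rw [hr, dist_pos]
      rintro rfl
      exact hzS hq
    have hrδ : r < δ/4 := Metric.mem_ball.1 hz
    -- nearest point of S to z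
    set K := S ∩ Metric.closedBall z r with hK
    have hKcomp : IsCompact K := (isCompact_closedBall z r).inter_left hclosed
    have hqK : q ∈ K := ⟨hq, by rw [Metric.mem_closedBall, dist_comm]⟩
    obtain ⟨y0, hy0K, hy0min⟩ := hKcomp.exists_isMinOn ⟨q, hqK⟩
      (continuous_const.dist continuous_id).continuousOn
    have hy0min' : ∀ x ∈ K, dist z y0 ≤ dist z x := isMinOn_iff.1 hy0min
    set ρ := dist z y0 with hρ
    have hρr : ρ ≤ r := by
      have := hy0min' q hqK
      rw [← hr] at this
      exact this
    have hρpos : 0 < ρ := by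
      rw [hρ, dist_pos]
      rintro rfl
      exact absurd hy0K.1 hzS
    have hballS : ∀ x, dist z x < ρ → f x < M := by
      intro x hx
      refine lt_of_le_of_ne (hp x) fun hxM => ?_
      have hxK : x ∈ K := ⟨hxM, Metric.mem_closedBall.2 (by rw [dist_comm]; linarith)⟩
      exact absurd (hy0min' x hxK) (not_le.2 hx)
    -- barrier parameters
    set α := (2*(n:ℝ)+1)/ρ^2 with hα
    have hαpos : 0 < α := by positivity
    have hαρ : α * ρ^2 = 2*n+1 := by
      rw [hα]; field_simp
    set C := Real.exp (-α * ρ^2) with hC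
    set C' := Real.exp (-α * (9*ρ^2/4)) with hC'
    have hCpos : 0 < C := Real.exp_pos _
    have hC'pos : 0 < C' := Real.exp_pos _
    have hC'C : C' < C := by
      rw [hC, hC']
      apply Real.exp_lt_exp.2
      nlinarith
    -- annulus
    set Ao := Metric.ball z (3*ρ/2) \ Metric.closedBall z (ρ/2) with hAo
    set A := Metric.closedBall z (3*ρ/2) \ Metric.ball z (ρ/2) with hA
    have hAoopen : IsOpen Ao := Metric.isOpen_ball.sdiff Metric.isClosed_closedBall
    have hAcomp : IsCompact A := (isCompact_closedBall _ _).diff Metric.isOpen_ball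
    have hAoA : Ao ⊆ A := fun x hx =>
      ⟨Metric.ball_subset_closedBall hx.1, fun h => hx.2 (Metric.ball_subset_closedBall h)⟩
    have hAU : A ⊆ U := by
      intro x hx
      apply hballU
      rw [Metric.mem_closedBall]
      have h1 : dist x z ≤ 3*ρ/2 := Metric.mem_closedBall.1 hx.1
      have h2 : dist x q ≤ dist x z + dist z q := dist_triangle x z q
      rw [← hr] at h2
      linarith
    have hinner_dist : ∀ x : EuclideanSpace ℝ (Fin n), ⟪x - z, x - z⟫ = dist x z ^ 2 := by
      intro x
      rw [real_inner_self_eq_norm_sq, dist_eq_norm]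
    -- Laplacian lower bound on the open annulus
    set c0 := C' * α with hc0
    have hc0pos : 0 < c0 := mul_pos hC'pos hαpos
    have hlaplbar : ∀ x ∈ Ao, c0 ≤ lapl (bar z α) x := by
      intro x hx
      rw [lapl_bar, hinner_dist]
      have hd1 : ρ/2 < dist x z := by
        by_contra hcon
        push_neg at hcon
        exact hx.2 (Metric.mem_closedBall.2 hcon)
      have hd2 : dist x z < 3*ρ/2 := Metric.mem_ball.1 hx.1
      have hd0 : (0:ℝ) ≤ dist x z := dist_nonneg
      have hbar_ge : C' ≤ bar z α x := by
        show C' ≤ Real.exp (-α * ⟪x - z, x - z⟫)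
        rw [hinner_dist, hC']
        apply Real.exp_le_exp.2
        have hdsq : dist x z^2 ≤ 9*ρ^2/4 := by nlinarith
        nlinarith [mul_nonneg hαpos.le (sub_nonneg.2 hdsq)]
      have hbar_pos : 0 < bar z α x := Real.exp_pos _
      have hbracket : α ≤ 4*α^2*(dist x z)^2 - 2*α*(n:ℝ) := by
        have hdsq2 : ρ^2/4 ≤ dist x z^2 := by nlinarith
        have h1 : 0 ≤ α^2*(4*dist x z^2 - ρ^2) :=
          mul_nonneg (sq_nonneg α) (by linarith)
        have h2 : α*(α*ρ^2) = α*(2*(n:ℝ)+1) := by rw [hαρ]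
        nlinarith [h1, h2]
      calc c0 = C' * α := hc0
      _ ≤ bar z α x * (4*α^2*(dist x z)^2 - 2*α*(n:ℝ)) :=
          mul_le_mul hbar_ge hbracket hαpos.le hbar_pos.le
    -- max of f on the inner sphere
    have hs1ne : (Metric.sphere z (ρ/2)).Nonempty :=
      NormedSpace.sphere_nonempty.2 (by positivity)
    obtain ⟨y1, hy1s, hy1max⟩ := (isCompact_sphere z (ρ/2)).exists_isMaxOn hs1ne hf.continuousOn
    have hy1max' : ∀ x ∈ Metric.sphere z (ρ/2), f x ≤ f y1 := isMaxOn_iff.1 hy1max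
    have hy1d : dist y1 z = ρ/2 := Metric.mem_sphere.1 hy1s
    have hy1lt : f y1 < M := hballS y1 (by rw [dist_comm]; linarith)
    set γ := M - f y1 with hγ
    have hγpos : 0 < γ := by linarith
    set η := γ/2 with hη
    have hηpos : 0 < η := by positivity
    set μ := min (γ/2) (η*(C - C')) with hμ
    have hμpos : 0 < μ := lt_min (by positivity) (mul_pos hηpos (by linarith))
    set G := fun x => f x + η * bar z α x with hG
    have hy0d : dist y0 z = ρ := by rw [dist_comm]
    have hy0A : y0 ∈ A := by
      constructor
      · rw [Metric.mem_closedBall, hy0d]; linarith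
      · rw [Metric.mem_ball, hy0d]; linarith
    have hbary0 : bar z α y0 = C := by
      show Real.exp (-α * ⟪y0 - z, y0 - z⟫) = C
      rw [hinner_dist, hy0d, hC]
    have hGy0 : G y0 = M + η * C := by
      show f y0 + η * bar z α y0 = M + η * C
      rw [hbary0, hy0K.1]
    have hbound : ∀ x ∈ A \ Ao, G x ≤ M + η * C - μ := by
      intro x hx
      have hd1 : ρ/2 ≤ dist x z := by
        have := hx.1.2
        rw [Metric.mem_ball] at this
        push_neg at this
        exact this
      have hd2 : dist x z ≤ 3*ρ/2 := Metric.mem_closedBall.1 hx.1.1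
      have hcases : dist x z = ρ/2 ∨ dist x z = 3*ρ/2 := by
        by_contra hcon
        push_neg at hcon
        apply hx.2
        refine ⟨Metric.mem_ball.2 (lt_of_le_of_ne hd2 hcon.2), ?_⟩
        rw [Metric.mem_closedBall]
        push_neg
        exact lt_of_le_of_ne hd1 (Ne.symm hcon.1)
      have hμ1 : μ ≤ γ/2 := min_le_left _ _
      have hμ2 : μ ≤ η*(C - C') := min_le_right _ _
      rcases hcases with h | h
      · have hfx : f x ≤ f y1 := hy1max' x (Metric.mem_sphere.2 h)
        have hbar1 : bar z α x ≤ 1 := by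
          show Real.exp (-α * ⟪x - z, x - z⟫) ≤ 1
          rw [hinner_dist]
          apply Real.exp_le_one_iff.2
          nlinarith
        have hb' : η * bar z α x ≤ η := mul_le_of_le_one_right hηpos.le hbar1
        have hb2 : 0 < η * C := mul_pos hηpos hCpos
        show f x + η * bar z α x ≤ M + η * C - μ
        linarith
      · have hfx : f x ≤ M := hp x
        have hbar2 : bar z α x = C' := by
          show Real.exp (-α * ⟪x - z, x - z⟫) = C'
          rw [hinner_dist, h, hC']
          congr 1
          ring
        show f x + η * bar z α x ≤ M + η * C - μ
        rw [hbar2]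
        linarith
    -- choose k
    have hev1 : ∀ᶠ k in Filter.atTop, -(η*c0) < a k :=
      ha.eventually (eventually_gt_nhds (neg_lt_zero.2 (mul_pos hηpos hc0pos)))
    have hev2 : ∀ᶠ k in Filter.atTop, ∀ x ∈ U, dist (f x) (fk k x) < μ/4 :=
      Metric.tendstoUniformlyOn_iff.1 hunif (μ/4) (by positivity)
    obtain ⟨k, hk1, hk2⟩ := (hev1.and hev2).exists
    have hsubk : SupportSubharmonicOn (fun x => fk k x + η * bar z α x) (a k + η * c0) Ao :=
      support_add_bar ((hsub k).mono (hAoA.trans hAU)) hηpos hlaplbar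
    have hGkcont : ContinuousOn (fun x => fk k x + η * bar z α x) A :=
      ((hfkc k).mono hAU).add
        ((continuous_const.mul (bar_contDiff z α).continuous).continuousOn)
    obtain ⟨b, hbA, hbmax⟩ := max_on_boundary hAcomp hAoopen hAoA hGkcont hsubk
      (by linarith [hk1]) ⟨y0, hy0A⟩
    have e1 := hk2 y0 (hAU hy0A)
    have e2 := hk2 b (hAU hbA.1)
    rw [Real.dist_eq] at e1 e2
    obtain ⟨e1a, e1b⟩ := abs_lt.1 e1
    obtain ⟨e2a, e2b⟩ := abs_lt.1 e2
    have e3 : fk k y0 + η * bar z α y0 ≤ fk k b + η * bar z α b := hbmax y0 hy0A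
    have e4 : f b + η * bar z α b ≤ M + η * C - μ := hbound b hbA
    have e5 : f y0 + η * bar z α y0 = M + η * C := hGy0
    linarith
  have huniv : S = Set.univ := IsClopen.eq_univ ⟨hclosed, hopen⟩ ⟨p, rfl⟩
  intro x y
  have hx : x ∈ S := huniv ▸ Set.mem_univ x
  have hy : y ∈ S := huniv ▸ Set.mem_univ y
  rw [hSdef] at hx hy
  rw [Set.mem_setOf_eq] at hx hy
  rw [hx, hy]
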